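/- Let H with 0 < H < 1, and let a > 0 and s > 0. Define the FIM-type tail T_I(l) = ∫_l^{∞} exp(−a·x^{1/H})·x^{1/H−2} dx and the Gaussian-type tail T_G(l) = ∫_l^{∞} exp(−x²/(2s)) dx. If 0 < H < 1/2 then T_I(l)/T_G(l) tends to 0 as l → ∞, and if 1/2 < H < 1 then T_I(l)/T_G(l) tends to +∞ as l → ∞. -/

import Mathlib

open MeasureTheory Real Filter

/-- The stretched-exponential (FIM-type) tail integral. -/
noncomputable def fimTail (H a l : ℝ) : ℝ :=
  ∫ x in Set.Ioi l, Real.exp (-a * x ^ (1 / H)) * x ^ (1 / H - 2)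

/-- The Gaussian-type tail integral. -/
noncomputable def gaussTail (s l : ℝ) : ℝ :=
  ∫ x in Set.Ioi l, Real.exp (-x ^ 2 / (2 * s))

lemma gauss_integrable (s l : ℝ) (hs : 0 < s) :
    IntegrableOn (fun x : ℝ => Real.exp (-x ^ 2 / (2 * s))) (Set.Ioi l) := by
  have h : Integrable (fun x : ℝ => Real.exp (-(1/(2*s)) * x ^ 2)) :=
    integrable_exp_neg_mul_sq (by positivity)
  refine (h.integrableOn (s := Set.Ioi l)).congr_fun (fun x _ => ?_) measurableSet_Ioi
  congr 1
  field_simp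

lemma gauss_pos (s l : ℝ) (hs : 0 < s) : 0 < gaussTail s l := by
  rw [gaussTail, setIntegral_pos_iff_support_of_nonneg_ae]
  · have : (Function.support fun x : ℝ => Real.exp (-x ^ 2 / (2 * s))) = Set.univ := by
      ext x; simp [Function.support, (Real.exp_pos _).ne']
    rw [this, Set.univ_inter]
    simp [Real.volume_Ioi]
  · filter_upwards with x using (Real.exp_pos _).le
  · exact gauss_integrable s l hs

lemma fim_integrable (H a l : ℝ) (hH0 : 0 < H) (hH1 : H < 1) (ha : 0 < a) (hl : 0 < l) :
    IntegrableOn (fun x : ℝ => Real.exp (-a * x ^ (1 / H)) * x ^ (1 / H - 2)) (Set.Ioi l) := by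
  have h1H : 1 < 1 / H := one_lt_one_div hH0 hH1
  have h : IntegrableOn (fun x : ℝ => x ^ (1 / H - 2) * Real.exp (-a * x ^ (1 / H)))
      (Set.Ioi 0) := integrableOn_rpow_mul_exp_neg_mul_rpow (by linarith) (by linarith) ha
  exact (h.mono_set (Set.Ioi_subset_Ioi hl.le)).congr_fun
    (fun x _ => mul_comm _ _) measurableSet_Ioi

lemma fim_eq (H a s x : ℝ) (hx : 0 < x) :
    Real.exp (-a * x ^ (1 / H)) * x ^ (1 / H - 2) =
      Real.exp (-x ^ 2 / (2 * s)) *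
        Real.exp (x ^ 2 / (2 * s) - a * x ^ (1 / H) + (1 / H - 2) * Real.log x) := by
  rw [Real.rpow_def_of_pos hx (1 / H - 2), ← Real.exp_add, ← Real.exp_add]
  ring_nf

lemma h_atBot (p a s : ℝ) (hp : 2 < p) (ha : 0 < a) :
    Tendsto (fun x : ℝ => x ^ 2 / (2 * s) - a * x ^ p + (p - 2) * Real.log x) atTop atBot := by
  have hp0 : 0 < p := by linarith
  have key : Tendsto (fun x : ℝ =>
      x ^ p * (x ^ (2 - p) / (2 * s) - a + (p - 2) * (Real.log x / x ^ p))) atTop atBot := by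
    refine Tendsto.atTop_mul_neg (C := 0 / (2 * s) - a + (p - 2) * 0) (by simp [ha])
      (tendsto_rpow_atTop hp0) ?_
    refine Tendsto.add (Tendsto.sub (Tendsto.div_const ?_ _) tendsto_const_nhds)
      (Tendsto.const_mul _ ?_)
    · simpa [neg_sub] using tendsto_rpow_neg_atTop (y := p - 2) (by linarith)
    · exact (isLittleO_log_rpow_atTop hp0).tendsto_div_nhds_zero
  refine key.congr' ?_
  filter_upwards [eventually_gt_atTop 0] with x hx
  have hxp : (0:ℝ) < x ^ p := Real.rpow_pos_of_pos hx p
  have h2 : x ^ p * x ^ (2 - p) = x ^ 2 := by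
    rw [← Real.rpow_add hx]
    norm_num [Real.rpow_two]
  have elog : Real.log x / x ^ p * x ^ p = Real.log x := div_mul_cancel₀ _ hxp.ne'
  calc x ^ p * (x ^ (2 - p) / (2 * s) - a + (p - 2) * (Real.log x / x ^ p))
      = (x ^ p * x ^ (2 - p)) / (2 * s) - a * x ^ p
          + (p - 2) * (Real.log x / x ^ p * x ^ p) := by ring
    _ = x ^ 2 / (2 * s) - a * x ^ p + (p - 2) * Real.log x := by rw [h2, elog]

lemma h_atTop (p a s : ℝ) (hp : p < 2) (hs : 0 < s) :
    Tendsto (fun x : ℝ => x ^ 2 / (2 * s) - a * x ^ p + (p - 2) * Real.log x) atTop atTop := by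
  have key : Tendsto (fun x : ℝ =>
      (x ^ (2:ℝ)) * (1 / (2 * s) - a * x ^ (p - 2) + (p - 2) * (Real.log x / x ^ (2:ℝ))))
      atTop atTop := by
    refine Tendsto.atTop_mul_pos (C := 1 / (2 * s) - a * 0 + (p - 2) * 0) (by simp; positivity)
      (tendsto_rpow_atTop (by norm_num)) ?_
    refine Tendsto.add (Tendsto.sub tendsto_const_nhds (Tendsto.const_mul _ ?_))
      (Tendsto.const_mul _ ?_)
    · simpa [neg_sub] using tendsto_rpow_neg_atTop (y := 2 - p) (by linarith)
    · exact (isLittleO_log_rpow_atTop (by norm_num)).tendsto_div_nhds_zero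
  refine key.congr' ?_
  filter_upwards [eventually_gt_atTop 0] with x hx
  have hx2 : (0:ℝ) < x ^ (2:ℝ) := Real.rpow_pos_of_pos hx 2
  have h2 : x ^ (2:ℝ) = x ^ (2:ℕ) := Real.rpow_two x ▸ by norm_num
  have h3 : x ^ (2:ℝ) * x ^ (p - 2) = x ^ p := by
    rw [← Real.rpow_add hx]; ring_nf
  have elog : Real.log x / x ^ (2:ℝ) * x ^ (2:ℝ) = Real.log x := div_mul_cancel₀ _ hx2.ne'
  calc x ^ (2:ℝ) * (1 / (2 * s) - a * x ^ (p - 2) + (p - 2) * (Real.log x / x ^ (2:ℝ)))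
      = x ^ (2:ℝ) / (2 * s) - a * (x ^ (2:ℝ) * x ^ (p - 2))
          + (p - 2) * (Real.log x / x ^ (2:ℝ) * x ^ (2:ℝ)) := by ring
    _ = x ^ 2 / (2 * s) - a * x ^ p + (p - 2) * Real.log x := by
        rw [h3, elog, h2]

lemma fim_nonneg (H a l : ℝ) (hl : 0 < l) : 0 ≤ fimTail H a l := by
  refine setIntegral_nonneg measurableSet_Ioi fun x hx => ?_
  have hx0 : (0:ℝ) < x := lt_trans hl hx
  exact mul_nonneg (Real.exp_pos _).le (Real.rpow_nonneg hx0.le _)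

/-- for sub-diffusion the FIM tail is infinitely lighter than the
Gaussian tail, and for super-diffusion it is infinitely heavier. -/
theorem fim_gauss_tail_ratio (H a s : ℝ) (hH0 : 0 < H) (hH1 : H < 1)
    (ha : 0 < a) (hs : 0 < s) :
    (H < 1 / 2 → Tendsto (fun l => fimTail H a l / gaussTail s l) atTop (nhds 0)) ∧
    (1 / 2 < H → Tendsto (fun l => fimTail H a l / gaussTail s l) atTop atTop) := by
  constructor
  · intro hH
    have hp2 : 2 < 1 / H := by rw [lt_div_iff₀ hH0]; linarith
    have hbot := h_atBot (1 / H) a s hp2 ha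
    have hexp : Tendsto
        (fun x : ℝ => Real.exp (x ^ 2 / (2 * s) - a * x ^ (1 / H) + (1 / H - 2) * Real.log x))
        atTop (nhds 0) := Real.tendsto_exp_atBot.comp hbot
    rw [NormedAddCommGroup.tendsto_nhds_zero]
    intro ε hε
    have hev := hexp.eventually (eventually_lt_nhds (show (0:ℝ) < ε / 2 by positivity))
    obtain ⟨L, hL⟩ := eventually_atTop.mp hev
    filter_upwards [eventually_ge_atTop (max L 1)] with l hl
    have hl1 : (1:ℝ) ≤ l := le_trans (le_max_right L 1) hl
    have hl0 : (0:ℝ) < l := by linarith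
    have hgpos := gauss_pos s l hs
    have hnn : 0 ≤ fimTail H a l / gaussTail s l :=
      div_nonneg (fim_nonneg H a l hl0) hgpos.le
    have hle : fimTail H a l ≤ ε / 2 * gaussTail s l := by
      have step : fimTail H a l ≤ ∫ x in Set.Ioi l, ε / 2 * Real.exp (-x ^ 2 / (2 * s)) := by
        refine setIntegral_mono_on (fim_integrable H a l hH0 hH1 ha hl0)
          ((gauss_integrable s l hs).const_mul _) measurableSet_Ioi fun x hx => ?_
        have hx0 : (0:ℝ) < x := lt_trans hl0 hx
        have hxL : L ≤ x := le_trans (le_trans (le_max_left L 1) hl) (le_of_lt hx)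
        rw [fim_eq H a s x hx0, mul_comm (ε / 2)]
        exact mul_le_mul_of_nonneg_left (hL x hxL).le (Real.exp_pos _).le
      calc fimTail H a l ≤ ∫ x in Set.Ioi l, ε / 2 * Real.exp (-x ^ 2 / (2 * s)) := step
        _ = ε / 2 * gaussTail s l := by rw [MeasureTheory.integral_const_mul]; rfl
    have hdiv : fimTail H a l / gaussTail s l ≤ ε / 2 := (div_le_iff₀ hgpos).mpr hle
    rw [Real.norm_eq_abs, abs_of_nonneg hnn]
    linarith
  · intro hH
    have hp2 : 1 / H < 2 := by rw [div_lt_iff₀ hH0]; linarith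
    have htop := h_atTop (1 / H) a s hp2 hs
    rw [tendsto_atTop]
    intro b
    have hM0 : (0:ℝ) < max b 1 := lt_of_lt_of_le one_pos (le_max_right b 1)
    have hev : ∀ᶠ x : ℝ in atTop, max b 1 ≤
        Real.exp (x ^ 2 / (2 * s) - a * x ^ (1 / H) + (1 / H - 2) * Real.log x) :=
      (Real.tendsto_exp_atTop.comp htop).eventually_ge_atTop _
    obtain ⟨L, hL⟩ := eventually_atTop.mp hev
    filter_upwards [eventually_ge_atTop (max L 1)] with l hl
    have hl1 : (1:ℝ) ≤ l := le_trans (le_max_right L 1) hl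
    have hl0 : (0:ℝ) < l := by linarith
    have hgpos := gauss_pos s l hs
    have hle : max b 1 * gaussTail s l ≤ fimTail H a l := by
      have step : (∫ x in Set.Ioi l, max b 1 * Real.exp (-x ^ 2 / (2 * s))) ≤ fimTail H a l := by
        refine setIntegral_mono_on ((gauss_integrable s l hs).const_mul _)
          (fim_integrable H a l hH0 hH1 ha hl0) measurableSet_Ioi fun x hx => ?_
        have hx0 : (0:ℝ) < x := lt_trans hl0 hx
        have hxL : L ≤ x := le_trans (le_trans (le_max_left L 1) hl) (le_of_lt hx)
        rw [fim_eq H a s x hx0, mul_comm (max b 1)]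
        exact mul_le_mul_of_nonneg_left (hL x hxL) (Real.exp_pos _).le
      calc max b 1 * gaussTail s l
          = ∫ x in Set.Ioi l, max b 1 * Real.exp (-x ^ 2 / (2 * s)) := by
            rw [MeasureTheory.integral_const_mul]; rfl
        _ ≤ fimTail H a l := step
    have hble : b * gaussTail s l ≤ fimTail H a l :=
      le_trans (mul_le_mul_of_nonneg_right (le_max_left b 1) hgpos.le) hle
    exact (le_div_iff₀ hgpos).mpr hble
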